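/- Let J be a safe justification, v a node justifiable with direct justification dj, and J' = Justify(J, v, dj). Then s(J') > s(J) in the lexicographic order on justification sizes. -/

import Mathlib

attribute [local instance] Classical.propDecidable

noncomputable section

/-- A parity game: an edge relation `E`, an owner function, a priority
function; every node has at least one outgoing edge. -/
structure ParityGame (V : Type*) where
  E : V → V → Prop
  owner : V → Fin 2
  pr : V → ℕ
  exists_succ : ∀ v, ∃ w, E v w

namespace ParityGame

variable {V : Type*}

/-- An infinite sequence of nodes following the relation `R`. -/
def IsInfPath (R : V → V → Prop) (π : ℕ → V) : Prop :=
  ∀ i, R (π i) (π (i + 1))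

/-- `ρ 0, …, ρ n` is a finite sequence of nodes following `R`. -/
def IsFinPath (R : V → V → Prop) (ρ : ℕ → V) (n : ℕ) : Prop :=
  ∀ i < n, R (ρ i) (ρ (i + 1))

/-- A cycle following `R`: a nonempty finite path ending in its starting node. -/
def IsCycle (R : V → V → Prop) (ρ : ℕ → V) (n : ℕ) : Prop :=
  0 < n ∧ IsFinPath R ρ n ∧ ρ n = ρ 0

/-- `w` is reachable from `v` following `R` (in zero or more steps). -/
def Reaches (R : V → V → Prop) (v w : V) : Prop :=
  Relation.ReflTransGen R v w

open Fin.NatCast in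
/-- The infinite play `π` is won by player `α`: the highest priority
occurring infinitely often in the play has parity `α`. -/
def InfWonBy (G : ParityGame V) (π : ℕ → V) (α : Fin 2) : Prop :=
  ∃ p : ℕ, {i | G.pr (π i) = p}.Infinite ∧
    (∀ q : ℕ, {i | G.pr (π i) = q}.Infinite → q ≤ p) ∧ (p : Fin 2) = α

/-- A play is consistent with a (partial, memoryless) strategy given as a set
of edges: whenever the play is at a node where the strategy selects an edge,
the play follows that edge. -/
def Consistent (σ : V → V → Prop) (π : ℕ → V) : Prop :=
  ∀ i u, σ (π i) u → π (i + 1) = u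

/-- Consistency of a finite play `ρ 0, …, ρ n` with a strategy. -/
def ConsistentFin (σ : V → V → Prop) (ρ : ℕ → V) (n : ℕ) : Prop :=
  ∀ i < n, ∀ u, σ (ρ i) u → ρ (i + 1) = u

open Fin.NatCast in
/-- The default hypothesis: each node is won by the parity of its priority. -/
def Hd (G : ParityGame V) (v : V) : Fin 2 := (G.pr v : Fin 2)

/-- `dj` is a direct justification for player `α` to win node `v`: a set
containing exactly one outgoing edge of `v` if `α` owns `v`, and all outgoing
edges of `v` otherwise. -/
def IsDJ (G : ParityGame V) (v : V) (α : Fin 2) (dj : Set (V × V)) : Prop :=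
  (G.owner v = α → ∃ w, G.E v w ∧ dj = {(v, w)}) ∧
  (G.owner v ≠ α → dj = {p | p.1 = v ∧ G.E v p.2})

/-- `dj` wins `v` for `α` under hypothesis `H`. -/
def WinsDJ (G : ParityGame V) (H : V → Fin 2) (v : V) (α : Fin 2)
    (dj : Set (V × V)) : Prop :=
  G.IsDJ v α dj ∧ ∀ p ∈ dj, H p.2 = α

/-- The parity game obtained from `G` and the parameter function `P` by
replacing, in every parameter `v`, the outgoing edges of `v` by the self-loop
`(v, v)` and the priority of `v` by its assigned winner `P v`. -/
def paramGame (G : ParityGame V) (P : V → Option (Fin 2)) : ParityGame V where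
  E := fun v w => if P v = none then G.E v w else w = v
  owner := G.owner
  pr := fun v => (P v).elim (G.pr v) Fin.val
  exists_succ := fun v => by
    by_cases h : P v = none
    · obtain ⟨w, hw⟩ := G.exists_succ v
      exact ⟨w, by simp [h, hw]⟩
    · exact ⟨v, by simp [h]⟩

/-- A justification for `G`: a subgraph `D` together with a hypothesis `H`. -/
structure Justification (G : ParityGame V) where
  D : V → V → Prop
  H : V → Fin 2

variable {G : ParityGame V}

namespace Justification

/-- `v` is justified in `J`: it has an outgoing edge in `D`. -/
def Justified (J : Justification G) (v : V) : Prop := ∃ w, J.D v w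

/-- The set of outgoing edges of `v` in `D`. -/
def outEdges (J : Justification G) (v : V) : Set (V × V) :=
  {p | p.1 = v ∧ J.D v p.2}

/-- `J` is weakly winning: the outgoing edges of every justified node `v`
form a direct justification winning `v` for `H v` under `H`. -/
def WeaklyWinning (J : Justification G) : Prop :=
  ∀ v, J.Justified v → G.WinsDJ J.H v (J.H v) (J.outEdges v)

/-- `J` is winning: weakly winning, and every infinite path in `D` is a play
of `G` won by the hypothetical winner of its nodes. -/
def Winning (J : Justification G) : Prop :=
  J.WeaklyWinning ∧
    ∀ π : ℕ → V, IsInfPath J.D π → G.InfWonBy π (J.H (π 0))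

/-- The parameter function `P_J`: the restriction of `H` to the unjustified
nodes of `J`. -/
def param (J : Justification G) (v : V) : Option (Fin 2) :=
  if J.Justified v then none else some (J.H v)

/-- The strategy `σ_{J,α}`: the set of edges `(v, w) ∈ D` with
`O v = H v = α`. -/
def strat (J : Justification G) (α : Fin 2) : V → V → Prop :=
  fun v w => J.D v w ∧ G.owner v = α ∧ J.H v = α

/-- `Par_J v`: the parameters (unjustified nodes) reachable from `v` in `D`. -/
def Par (J : Justification G) (v : V) : Set V :=
  {w | Reaches J.D v w ∧ ¬ J.Justified w}

/-- The justification level of `v`: the minimal priority of a parameter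
reachable from `v`, and `⊤` (`+∞`) if there is none. -/
def jl (J : Justification G) (v : V) : ℕ∞ :=
  sInf ((fun w => (G.pr w : ℕ∞)) '' J.Par v)

/-- The justification level of a direct justification: the minimum of the
justification levels of the targets of its edges. -/
def jlDJ (J : Justification G) (dj : Set (V × V)) : ℕ∞ :=
  sInf ((fun p : V × V => J.jl p.2) '' dj)

/-- `J` is safe: winning, unjustified nodes have their default winner as
hypothesis, and the justification level of every node is at least its
priority. -/
def Safe (J : Justification G) : Prop :=
  J.Winning ∧ (∀ v, ¬ J.Justified v → J.H v = G.Hd v) ∧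
    ∀ v, (G.pr v : ℕ∞) ≤ J.jl v

/-- `J[v : dj, α]`: replace the outgoing `D`-edges of `v` by `dj` and set
`H v := α`. -/
def update (J : Justification G) (v : V) (dj : Set (V × V)) (α : Fin 2) :
    Justification G where
  D := fun x y => if x = v then (x, y) ∈ dj else J.D x y
  H := fun x => if x = v then α else J.H x

/-- `J[v : ∅, Hf v | v ∈ S]`: remove the direct justification of every
`v ∈ S` and set `H v := Hf v`. -/
def resetAll (J : Justification G) (S : Set V) (Hf : V → Fin 2) :
    Justification G where
  D := fun x y => if x ∈ S then False else J.D x y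
  H := fun x => if x ∈ S then Hf x else J.H x

/-- `s_i(J)`: the number of justified nodes of justification level `i`. -/
def size (J : Justification G) (i : ℕ∞) : ℕ :=
  {v | J.Justified v ∧ J.jl v = i}.ncard

end Justification

/-- The preconditions of the operation `Justify(J, v, dj)`. -/
def Executable (G : ParityGame V) (J : Justification G) (v : V)
    (dj : Set (V × V)) : Prop :=
  J.Safe ∧ (∃ α, G.WinsDJ J.H v α dj) ∧
    (if J.Justified v then J.jl v < J.jlDJ dj else J.jl v ≤ J.jlDJ dj)

/-- The operation `Justify(J, v, dj)`, where `α` is the player winning `v`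
by `dj`: if `H v = α` this is `J[v : dj, α]`; otherwise all nodes reaching
`v` in `D` are reset to their default winner and then `v` gets `dj`. -/
def justify (G : ParityGame V) (J : Justification G) (v : V)
    (dj : Set (V × V)) (α : Fin 2) : Justification G :=
  if J.H v = α then J.update v dj α
  else (J.resetAll {w | Reaches J.D w v} G.Hd).update v dj α

/-- The empty justification `(V, ∅, H_d)`. -/
def Justification.empty (G : ParityGame V) : Justification G :=
  ⟨fun _ _ => False, G.Hd⟩

/-!
If `H v = α`, `Justify` only redirects `v`. As `jl dj ≥ jl v`, no justification level drops,
and `v` either becomes justified or rises in level, so the changed node of highest new level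
witnesses the increase.

If `H v ≠ α`, weak winningness forces `v` to be unjustified, so `jl v = pr v`, and the nodes
reset are those reaching `v`, all of level at most `pr v`. The new parameters below `v` lie
beyond `dj` outside the reset region, so they are won by `α` and, by safety, have priority of
parity `α`, at least `jl dj ≥ pr v`. Their parity differs from that of `pr v`, so the new level
of `v` exceeds `pr v`: the size grows there and is unchanged above.
-/

theorem _root_.Relation.ReflTransGen.mem_of_backwardClosed {W : Type*} {R : W → W → Prop}
    {S : Set W} (hS : ∀ a b, R a b → b ∈ S → a ∈ S) {a b : W}
    (h : Relation.ReflTransGen R a b) (hb : b ∈ S) : a ∈ S := by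
  induction h with
  | refl => exact hb
  | tail _ hstep ih => exact ih (hS _ _ hstep hb)

theorem _root_.Relation.ReflTransGen.of_agree_off {W : Type*} {A B : W → W → Prop}
    {S : Set W} (hAB : ∀ a ∉ S, ∀ b, A a b → B a b) (hS : ∀ a b, A a b → b ∈ S → a ∈ S)
    {a b : W} (h : Relation.ReflTransGen A a b) (ha : a ∉ S) : Relation.ReflTransGen B a b := by
  induction h using Relation.ReflTransGen.head_induction_on with
  | refl => exact .refl
  | head hac _ ih => exact .head (hAB _ ha _ hac) (ih fun hc => ha (hS _ _ hac hc))

theorem _root_.Relation.reflTransGen_iff_of_agree_off {W : Type*} {A B : W → W → Prop}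
    {S : Set W} (hAB : ∀ a ∉ S, ∀ b, A a b ↔ B a b) (hS : ∀ a b, A a b → b ∈ S → a ∈ S)
    {a b : W} (ha : a ∉ S) : Relation.ReflTransGen A a b ↔ Relation.ReflTransGen B a b := by
  have hS' : ∀ a b, B a b → b ∈ S → a ∈ S := fun a b hab hb =>
    by_contra fun ha => ha (hS a b ((hAB a ha b).mpr hab) hb)
  exact ⟨fun h => h.of_agree_off (fun a ha b => (hAB a ha b).mp) hS ha,
    fun h => h.of_agree_off (fun a ha b => (hAB a ha b).mpr) hS' ha⟩

theorem _root_.Relation.ReflTransGen.elim_edges_from {W : Type*} {R R' : W → W → Prop}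
    {v : W} {T : W → Prop} (hR : ∀ a b, R' a b → R a b ∨ (a = v ∧ T b)) {a b : W}
    (h : Relation.ReflTransGen R' a b) :
    Relation.ReflTransGen R a b ∨
      (Relation.ReflTransGen R a v ∧ ∃ u, T u ∧ Relation.ReflTransGen R u b) := by
  induction h using Relation.ReflTransGen.head_induction_on with
  | refl => exact .inl .refl
  | @head a c hac _ ih =>
    rcases hR a c hac with hR | ⟨rfl, hc⟩
    · rcases ih with h | ⟨h, u, hu, hub⟩
      · exact .inl (.head hR h)
      · exact .inr ⟨.head hR h, u, hu, hub⟩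
    · rcases ih with h | ⟨_, u, hu, hub⟩
      · exact .inr ⟨.refl, c, hc, h⟩
      · exact .inr ⟨.refl, u, hu, hub⟩

theorem IsDJ.exists_mem {v : V} {α : Fin 2} {dj : Set (V × V)} (h : G.IsDJ v α dj) :
    ∃ w, (v, w) ∈ dj := by
  by_cases ho : G.owner v = α
  · obtain ⟨w, -, rfl⟩ := h.1 ho
    exact ⟨w, rfl⟩
  · obtain ⟨w, hw⟩ := G.exists_succ v
    exact ⟨w, by rw [h.2 ho]; exact ⟨rfl, hw⟩⟩

/-- Of two players with distinct winners one owns `v`; its single chosen edge also belongs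
to the opponent's direct justification, which contains all edges of `v`. -/
theorem WinsDJ.player_eq {H : V → Fin 2} {v : V} {α β : Fin 2} {dj dj' : Set (V × V)}
    (h : G.WinsDJ H v α dj) (h' : G.WinsDJ H v β dj') : α = β := by
  by_contra hne
  have key : ∀ {α β dj dj'}, G.WinsDJ H v α dj → G.WinsDJ H v β dj' → α ≠ β →
      G.owner v = α → False := by
    intro α β dj dj' h h' hne ho
    obtain ⟨w, hw, rfl⟩ := h.1.1 ho
    have hw' : (v, w) ∈ dj' := by rw [h'.1.2 (ho ▸ hne)]; exact ⟨rfl, hw⟩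
    exact hne ((h.2 (v, w) rfl).symm.trans (h'.2 (v, w) hw'))
  by_cases ho : G.owner v = α
  · exact key h h' hne ho
  · exact key h' h (Ne.symm hne) (by omega)

namespace Justification

variable {J : Justification G} {v w x : V} {dj : Set (V × V)} {α : Fin 2}

theorem WeaklyWinning.H_eq_of_reaches (hJ : J.WeaklyWinning) (h : Reaches J.D w x) :
    J.H x = J.H w := by
  induction h with
  | refl => rfl
  | @tail b c _ hbc ih => exact ((hJ b ⟨c, hbc⟩).2 (b, c) ⟨rfl, hbc⟩).trans ih

theorem not_justified_of_H_ne (hJ : J.WeaklyWinning) (hwin : G.WinsDJ J.H v α dj)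
    (hα : J.H v ≠ α) : ¬ J.Justified v :=
  fun hv => hα ((hJ v hv).player_eq hwin)

theorem jl_le_pr (hx : x ∈ J.Par w) : J.jl w ≤ G.pr x :=
  sInf_le ⟨x, hx, rfl⟩

theorem le_jl_iff {c : ℕ∞} : c ≤ J.jl w ↔ ∀ x ∈ J.Par w, c ≤ G.pr x := by
  simp only [jl, le_sInf_iff, Set.forall_mem_image]

theorem jl_le_jl_of_reaches (h : Reaches J.D w v) : J.jl w ≤ J.jl v :=
  le_jl_iff.mpr fun _ ⟨hvx, hx⟩ => jl_le_pr ⟨h.trans hvx, hx⟩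

theorem jlDJ_le_jl {u : V} (h : (v, u) ∈ dj) : J.jlDJ dj ≤ J.jl u :=
  sInf_le ⟨(v, u), h, rfl⟩

theorem Safe.jl_eq_pr (hJ : J.Safe) (hv : ¬ J.Justified v) : J.jl v = G.pr v :=
  le_antisymm (jl_le_pr ⟨.refl, hv⟩) (hJ.2.2 v)

/-- Justification levels only depend on the graph reachable from a node. -/
theorem jl_eq_of_agree_off {J' : Justification G} {S : Set V}
    (hagree : ∀ x ∉ S, ∀ y, J'.D x y ↔ J.D x y) (hS : ∀ x y, J.D x y → y ∈ S → x ∈ S)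
    (hw : w ∉ S) : J'.jl w = J.jl w := by
  have hreach : ∀ {x}, Reaches J'.D w x ↔ Reaches J.D w x := fun {_} =>
    Relation.reflTransGen_iff_of_agree_off (fun x hx y => (hagree x hx y).symm) hS hw |>.symm
  have hjust : ∀ x ∉ S, (J'.Justified x ↔ J.Justified x) := fun x hx =>
    exists_congr (hagree x hx)
  have hPar : J'.Par w = J.Par w := by
    ext x
    change Reaches J'.D w x ∧ _ ↔ Reaches J.D w x ∧ _
    rw [hreach]
    exact and_congr_right fun hwx =>
      not_congr (hjust x fun hx => hw (hwx.mem_of_backwardClosed hS hx))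
  simp only [jl, hPar]

/-- The lexicographic order on sizes, `s(J) < s(J')`. -/
def SizeLt (J J' : Justification G) : Prop :=
  ∃ i : ℕ∞, J.size i < J'.size i ∧ ∀ j : ℕ∞, i < j → J'.size j = J.size j

theorem sizeLt_of_stable_above [Finite V] {J J' : Justification G} {w₀ : V}
    (hw₀ : J'.Justified w₀) (hnew : ¬ (J.Justified w₀ ∧ J.jl w₀ = J'.jl w₀))
    (hkeep : ∀ u, J.Justified u → J'.jl w₀ ≤ J.jl u → J'.Justified u ∧ J'.jl u = J.jl u)
    (hback : ∀ u, J'.Justified u → J'.jl w₀ < J'.jl u → J.Justified u ∧ J.jl u = J'.jl u) :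
    SizeLt J J' := by
  refine ⟨J'.jl w₀, Set.ncard_lt_ncard ?_ (Set.toFinite _), fun j hj => congrArg Set.ncard ?_⟩
  · refine (Set.ssubset_iff_of_subset ?_).mpr ⟨w₀, ⟨hw₀, rfl⟩, hnew⟩
    rintro u ⟨hu, hju⟩
    obtain ⟨hu', hju'⟩ := hkeep u hu hju.ge
    exact ⟨hu', hju'.trans hju⟩
  · ext u
    constructor
    · rintro ⟨hu, rfl⟩
      exact hback u hu hj
    · rintro ⟨hu, rfl⟩
      obtain ⟨hu', hju'⟩ := hkeep u hu hj.le
      exact ⟨hu', hju'⟩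

/-- The witness is a changed node of maximal new level. -/
theorem sizeLt_of_le [Finite V] {J J' : Justification G}
    (hjust : ∀ w, J.Justified w → J'.Justified w) (hjl : ∀ w, J.jl w ≤ J'.jl w)
    (hchange : ∃ w, J'.Justified w ∧ ¬ (J.Justified w ∧ J.jl w = J'.jl w)) :
    SizeLt J J' := by
  set Δ := {w | J'.Justified w ∧ ¬ (J.Justified w ∧ J.jl w = J'.jl w)}
  obtain ⟨w₀, ⟨hw₀, hnew⟩, hmax⟩ := Δ.exists_max_image J'.jl (Set.toFinite Δ) hchange
  refine sizeLt_of_stable_above hw₀ hnew (fun u hu hle => ⟨hjust u hu, ?_⟩) fun u hu hlt => ?_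
  · by_contra hne
    have := hmax u ⟨hjust u hu, fun h => hne h.2.symm⟩
    exact hne (le_antisymm (this.trans hle) (hjl u))
  · by_contra hΔ
    exact (hmax u ⟨hu, hΔ⟩).not_gt hlt

section Update

variable {u : V}

theorem justified_update_self (hu : (v, u) ∈ dj) : (J.update v dj α).Justified v :=
  ⟨u, by simpa [update] using hu⟩

theorem justified_update_of_ne (hx : x ≠ v) :
    (J.update v dj α).Justified x ↔ J.Justified x := by
  simp [Justified, update, hx]

theorem reaches_update (h : Reaches (J.update v dj α).D w x) :
    Reaches J.D w x ∨ (Reaches J.D w v ∧ ∃ u, (v, u) ∈ dj ∧ Reaches J.D u x) :=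
  Relation.ReflTransGen.elim_edges_from (T := fun u => (v, u) ∈ dj) (fun a b hab => by
    by_cases ha : a = v
    · subst ha; exact .inr ⟨rfl, by simpa [update] using hab⟩
    · exact .inl (by simpa [update, ha] using hab)) h

theorem mem_Par_update (hu : (v, u) ∈ dj) (hx : x ∈ (J.update v dj α).Par w) :
    x ∈ J.Par w ∨ (Reaches J.D w v ∧ ∃ u, (v, u) ∈ dj ∧ x ∈ J.Par u) := by
  obtain ⟨hwx, hxJ'⟩ := hx
  have hxv : x ≠ v := by rintro rfl; exact hxJ' (justified_update_self hu)
  have hxJ : ¬ J.Justified x := by rwa [justified_update_of_ne hxv] at hxJ'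
  rcases reaches_update hwx with h | ⟨hwv, u', hu', hu'x⟩
  · exact .inl ⟨h, hxJ⟩
  · exact .inr ⟨hwv, u', hu', hu'x, hxJ⟩

theorem jl_le_jl_update (hu : (v, u) ∈ dj) (hlev : J.jl v ≤ J.jlDJ dj) (w : V) :
    J.jl w ≤ (J.update v dj α).jl w := by
  refine le_jl_iff.mpr fun x hx => ?_
  rcases mem_Par_update hu hx with h | ⟨hwv, u', hu', hx'⟩
  · exact jl_le_pr h
  · calc J.jl w ≤ J.jl v := jl_le_jl_of_reaches hwv
      _ ≤ J.jlDJ dj := hlev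
      _ ≤ J.jl u' := jlDJ_le_jl hu'
      _ ≤ G.pr x := jl_le_pr hx'

theorem jlDJ_le_jl_update_self (hu : (v, u) ∈ dj) :
    J.jlDJ dj ≤ (J.update v dj α).jl v := by
  refine le_jl_iff.mpr fun x ⟨hvx, hxJ'⟩ => ?_
  rcases hvx.cases_head with rfl | ⟨c, hvc, hcx⟩
  · exact absurd (justified_update_self hu) hxJ'
  · have hc : (v, c) ∈ dj := by simpa [update] using hvc
    rcases mem_Par_update hu ⟨hcx, hxJ'⟩ with h | ⟨-, u', hu', hx'⟩
    · exact (jlDJ_le_jl hc).trans (jl_le_pr h)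
    · exact (jlDJ_le_jl hu').trans (jl_le_pr hx')

theorem sizeLt_update [Finite V] (hu : (v, u) ∈ dj)
    (hlev : if J.Justified v then J.jl v < J.jlDJ dj else J.jl v ≤ J.jlDJ dj) :
    SizeLt J (J.update v dj α) := by
  have hle : J.jl v ≤ J.jlDJ dj := by split_ifs at hlev <;> [exact hlev.le; exact hlev]
  refine sizeLt_of_le (fun w hw => ?_) (jl_le_jl_update hu hle)
    ⟨v, justified_update_self hu, fun ⟨hv, hjl⟩ => ?_⟩
  · by_cases hwv : w = v
    · subst hwv
      exact justified_update_self hu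
    · exact (justified_update_of_ne hwv).mpr hw
  · rw [if_pos hv] at hlev
    exact (hlev.trans_le (jlDJ_le_jl_update_self hu)).ne hjl

end Update

section Reset

variable {u : V} {S : Set V} {Hf : V → Fin 2}

theorem update_resetAll_D_of_not_mem (hv : v ∈ S) (hx : x ∉ S) (y : V) :
    ((J.resetAll S Hf).update v dj α).D x y ↔ J.D x y := by
  have hxv : x ≠ v := by rintro rfl; exact hx hv
  simp [update, resetAll, hxv, hx]

theorem not_justified_update_resetAll (hx : x ∈ S) (hxv : x ≠ v) :
    ¬ ((J.resetAll S Hf).update v dj α).Justified x := by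
  simp [Justified, update, resetAll, hxv, hx]

theorem pr_lt_jl_update_resetAll (hsafe : J.Safe) (hwin : G.WinsDJ J.H v α dj)
    (hα : J.H v ≠ α) (hv : ¬ J.Justified v) (hlev : J.jl v ≤ J.jlDJ dj)
    (hu : (v, u) ∈ dj) :
    (G.pr v : ℕ∞) < ((J.resetAll {w | Reaches J.D w v} G.Hd).update v dj α).jl v := by
  set S := {w | Reaches J.D w v}
  have hvS : v ∈ S := .refl
  have hS : ∀ x y, J.D x y → y ∈ S → x ∈ S := fun _ _ hxy hy => .head hxy hy
  refine (ENat.add_one_le_iff (ENat.natCast_ne_top _)).mp (le_jl_iff.mpr fun x ⟨hvx, hxK⟩ => ?_)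
  rcases hvx.cases_head with rfl | ⟨c, hvc, hcx⟩
  · exact absurd (justified_update_self hu) hxK
  have hc : (v, c) ∈ dj := by simpa [update] using hvc
  have hHc : J.H c = α := hwin.2 (v, c) hc
  have hcS : c ∉ S := fun hcS => hα ((hsafe.1.1.H_eq_of_reaches hcS).trans hHc)
  have hcx' : Reaches J.D c x := (Relation.reflTransGen_iff_of_agree_off
    (fun a ha b => (update_resetAll_D_of_not_mem hvS ha b).symm) hS hcS).mpr hcx
  have hxS : x ∉ S := fun hxS => hcS (hcx'.mem_of_backwardClosed hS hxS)
  have hxJ : ¬ J.Justified x :=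
    fun h => hxK (exists_congr (update_resetAll_D_of_not_mem hvS hxS) |>.mpr h)
  have hle : (G.pr v : ℕ∞) ≤ G.pr x := calc
    (G.pr v : ℕ∞) = J.jl v := (hsafe.jl_eq_pr hv).symm
    _ ≤ J.jlDJ dj := hlev
    _ ≤ J.jl c := jlDJ_le_jl hc
    _ ≤ G.pr x := jl_le_pr ⟨hcx', hxJ⟩
  have hne : G.pr v ≠ G.pr x := by
    intro h
    have hHd : G.Hd v = G.Hd x := by simp only [Hd, h]
    refine hα ?_
    rw [hsafe.2.1 v hv, hHd, ← hsafe.2.1 x hxJ, hsafe.1.1.H_eq_of_reaches hcx', hHc]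
  exact_mod_cast Nat.lt_of_le_of_ne (by exact_mod_cast hle) hne

theorem sizeLt_update_resetAll [Finite V] (hsafe : J.Safe) (hwin : G.WinsDJ J.H v α dj)
    (hα : J.H v ≠ α)
    (hlev : if J.Justified v then J.jl v < J.jlDJ dj else J.jl v ≤ J.jlDJ dj) :
    SizeLt J ((J.resetAll {w | Reaches J.D w v} G.Hd).update v dj α) := by
  have hv := not_justified_of_H_ne hsafe.1.1 hwin hα
  rw [if_neg hv] at hlev
  obtain ⟨u, hu⟩ := hwin.1.exists_mem
  set S := {w | Reaches J.D w v}
  have hvS : v ∈ S := .refl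
  have hS : ∀ x y, J.D x y → y ∈ S → x ∈ S := fun _ _ hxy hy => .head hxy hy
  have hlt := pr_lt_jl_update_resetAll hsafe hwin hα hv hlev hu
  have hjlS : ∀ w ∈ S, J.jl w ≤ G.pr v := fun w hw =>
    (jl_le_jl_of_reaches hw).trans (hsafe.jl_eq_pr hv).le
  have hout : ∀ w ∉ S, (((J.resetAll S G.Hd).update v dj α).Justified w ↔ J.Justified w) ∧
      ((J.resetAll S G.Hd).update v dj α).jl w = J.jl w := fun w hw =>
    ⟨exists_congr (update_resetAll_D_of_not_mem hvS hw),
      jl_eq_of_agree_off (fun x hx => update_resetAll_D_of_not_mem hvS hx) hS hw⟩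
  refine sizeLt_of_stable_above (justified_update_self hu) (fun h => hv h.1)
    (fun w hw hle => ?_) fun w hw hlt' => ?_
  · have hwS : w ∉ S := fun hwS => (hle.trans (hjlS w hwS)).not_gt hlt
    exact ⟨(hout w hwS).1.mpr hw, (hout w hwS).2⟩
  · have hwS : w ∉ S := by
      intro hwS
      by_cases hwv : w = v
      · subst hwv
        exact lt_irrefl _ hlt'
      · exact not_justified_update_resetAll hwS hwv hw
    exact ⟨(hout w hwS).1.mp hw, (hout w hwS).2.symm⟩

end Reset

end Justification

/-- if `J` is safe and `v` is justifiable with `dj` (the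
preconditions of `Justify(J, v, dj)` hold, `α` being the winning player),
then the size of `Justify(J, v, dj)` is strictly larger than the size of `J`
in the lexicographic order (higher justification levels being more
significant). -/
theorem stmt_14 {V : Type*} [Fintype V] {G : ParityGame V}
    (J : Justification G) (v : V) (dj : Set (V × V)) (α : Fin 2)
    (hsafe : J.Safe) (hwin : G.WinsDJ J.H v α dj)
    (hlev : if J.Justified v then J.jl v < J.jlDJ dj
            else J.jl v ≤ J.jlDJ dj) :
    ∃ i : ℕ∞, J.size i < (justify G J v dj α).size i ∧
      ∀ j : ℕ∞, i < j → (justify G J v dj α).size j = J.size j := by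
  by_cases hα : J.H v = α
  · obtain ⟨u, hu⟩ := hwin.1.exists_mem
    rw [justify, if_pos hα]
    exact Justification.sizeLt_update hu hlev
  · rw [justify, if_neg hα]
    exact Justification.sizeLt_update_resetAll hsafe hwin hα hlev

end ParityGame

end
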